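/- Let b ∈ F with b ≠ 0. The image of the map f : F → F, f(a) = a b⁴ + a⁴ b, is exactly the set b⁵ · ker Tr = {b⁵ k : k ∈ F, Tr(k) = 0}. -/

import Mathlib

/-- `F` is the field `GF(8)` with 8 elements (characteristic 2). -/
noncomputable abbrev F : Type := GaloisField 2 3

noncomputable def Tr (α : F) : F := α + α ^ 2 + α ^ 4

/-! Writing `a = b t`, one has `a b⁴ + a⁴ b = b⁵ (t + t⁴)`, so it suffices that `t ↦ t + t⁴` maps
onto `ker Tr`. It maps into it because `Tr` is additive and `Tr (t⁴) = Tr t`; it is onto because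
`k + k²` is a preimage of any `k` with `Tr k = 0`, as `(k + k²)⁴ = k⁴ + k⁸ = k⁴ + k`. -/

theorem add_pow_four_of_charTwo {R : Type*} [CommSemiring R] [CharP R 2] (x y : R) :
    (x + y) ^ 4 = x ^ 4 + y ^ 4 :=
  add_pow_char_pow (p := 2) (n := 2) x y

theorem pow_eight_eq_self (x : F) : x ^ 8 = x := by
  have : Fintype F := Fintype.ofFinite F
  simpa [← Nat.card_eq_fintype_card, GaloisField.card 2 3] using FiniteField.pow_card x

theorem Tr_add (x y : F) : Tr (x + y) = Tr x + Tr y := by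
  unfold Tr
  rw [CharTwo.add_sq, add_pow_four_of_charTwo]
  ring

theorem Tr_pow_four (x : F) : Tr (x ^ 4) = Tr x := by
  have h16 : x ^ 16 = x ^ 2 := by rw [show 16 = 8 * 2 by rfl, pow_mul, pow_eight_eq_self]
  unfold Tr
  rw [← pow_mul, ← pow_mul, show 4 * 2 = 8 by rfl, show 4 * 4 = 16 by rfl, pow_eight_eq_self, h16]
  ring

theorem Tr_add_pow_four_self (t : F) : Tr (t + t ^ 4) = 0 := by
  rw [Tr_add, Tr_pow_four, CharTwo.add_self_eq_zero]

theorem exists_add_pow_four_eq_of_Tr_eq_zero {k : F} (hk : Tr k = 0) : ∃ t, t + t ^ 4 = k := by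
  refine ⟨k + k ^ 2, ?_⟩
  rw [add_pow_four_of_charTwo, ← pow_mul, show 2 * 4 = 8 by rfl, pow_eight_eq_self]
  unfold Tr at hk
  linear_combination hk

/-- For `b ≠ 0` in `F`, the image of `f : a ↦ a b⁴ + a⁴ b` is exactly
`b⁵ · ker Tr`. -/
theorem range_f_eq (b : F) (hb : b ≠ 0) :
    Set.range (fun a : F => a * b ^ 4 + a ^ 4 * b) =
      {x : F | ∃ k : F, Tr k = 0 ∧ x = b ^ 5 * k} := by
  have scale (t : F) : (b * t) * b ^ 4 + (b * t) ^ 4 * b = b ^ 5 * (t + t ^ 4) := by ring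
  ext x
  constructor
  · rintro ⟨a, rfl⟩
    refine ⟨a / b + (a / b) ^ 4, Tr_add_pow_four_self _, ?_⟩
    simp only [← scale, mul_div_cancel₀ a hb]
  · rintro ⟨k, hk, rfl⟩
    obtain ⟨t, rfl⟩ := exists_add_pow_four_eq_of_Tr_eq_zero hk
    exact ⟨b * t, scale t⟩
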